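/- arXiv:math/0207226 — 3 statements merged into one kernel-verified Lean document; each statement's English description precedes it below -/
import Mathlib

section
/- For all real x with |x| ≤ 1 and all τ with 0 < τ < 1, one has τ·exp((1-τ)x) + (1-τ)·exp(-τx) ≤ exp(2τ(1-τ)x²). -/
lemma exp_le_one_add_add_sq {y : ℝ} (hy : |y| ≤ 1) : Real.exp y ≤ 1 + y + y ^ 2 := by
  have h := Real.exp_bound hy (n := 2) (by norm_num)
  have hs : ∑ m ∈ Finset.range 2, y ^ m / m.factorial = 1 + y := by
    simp [Finset.sum_range_succ]
  rw [hs] at h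
  have h2 : |y| ^ 2 = y ^ 2 := sq_abs y
  rw [h2] at h
  norm_num [Nat.factorial] at h
  have := abs_le.mp h
  nlinarith [sq_nonneg y]

theorem bernoulli_mgf_bound (x τ : ℝ) (hx : |x| ≤ 1) (hτ0 : 0 < τ) (hτ1 : τ < 1) :
    τ * Real.exp ((1 - τ) * x) + (1 - τ) * Real.exp (-τ * x) ≤
      Real.exp (2 * τ * (1 - τ) * x ^ 2) := by
  have hxabs := abs_le.mp hx
  have h1 : |(1 - τ) * x| ≤ 1 := by
    rw [abs_mul]
    have : |1 - τ| ≤ 1 := by rw [abs_le]; constructor <;> linarith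
    calc |1 - τ| * |x| ≤ 1 * 1 := by
          apply mul_le_mul this hx (abs_nonneg x) zero_le_one
      _ = 1 := by ring
  have h2 : |-τ * x| ≤ 1 := by
    rw [abs_mul]
    have : |-τ| ≤ 1 := by rw [abs_le]; constructor <;> linarith
    calc |-τ| * |x| ≤ 1 * 1 := by
          apply mul_le_mul this hx (abs_nonneg x) zero_le_one
      _ = 1 := by ring
  have e1 := exp_le_one_add_add_sq h1
  have e2 := exp_le_one_add_add_sq h2
  have key : τ * Real.exp ((1 - τ) * x) + (1 - τ) * Real.exp (-τ * x) ≤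
      1 + τ * (1 - τ) * x ^ 2 := by nlinarith [sq_nonneg x]
  have h3 : 1 + 2 * τ * (1 - τ) * x ^ 2 ≤ Real.exp (2 * τ * (1 - τ) * x ^ 2) :=
    Real.add_one_le_exp _ |>.trans_eq' (by ring)
  nlinarith [sq_nonneg x]
end

section
/- Let ξ_1,…,ξ_n be i.i.d. random variables with P[ξ_j = 1] = τ and P[ξ_j = 0] = 1-τ. Then for every positive integer q, E[(∑_{j=1}^n ξ_j)^q] ≤ (q + e·τ·n)^q. -/
/-!
Expanding `(∑ j, ξ j)^q` over words `f : Fin q → Fin n` and using independence together with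
`ξ j ^ k = ξ j` (for `k ≥ 1`), the `q`-th moment equals `∑ f, τ ^ #(image f)`. Building the
words letter by letter, a letter already used contributes a factor `1` (at most `q` choices) and a
new letter a factor `τ` (at most `n` choices), so the sum is at most `(q + τ n)^q`.
-/

open MeasureTheory ProbabilityTheory Finset

theorem Finset.prod_comp_eq_prod_image_of_isIdempotentElem {ι κ M : Type*} [CommMonoid M]
    [DecidableEq κ] (s : Finset ι) (g : ι → κ) (x : κ → M)
    (hx : ∀ i ∈ s, IsIdempotentElem (x (g i))) :
    ∏ i ∈ s, x (g i) = ∏ a ∈ s.image g, x a := by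
  refine (prod_image' _ fun i hi ↦ ?_).symm
  rw [prod_congr rfl fun j hj ↦ congrArg x (mem_filter.1 hj).2, prod_const]
  exact ((hx i hi).pow_eq (card_ne_zero.2 ⟨i, by simp [hi]⟩)).symm

theorem Fin.image_univ_cons {α : Type*} [DecidableEq α] {q : ℕ} (a : α) (g : Fin q → α) :
    univ.image (Fin.cons a g : Fin (q + 1) → α) = insert a (univ.image g) := by
  apply coe_injective
  simp [Fin.range_cons]

section Combinatorics

variable {α : Type*} [Fintype α] [DecidableEq α] {τ : ℝ}

theorem sum_pow_card_insert_le (hτ : 0 ≤ τ) (s : Finset α) :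
    ∑ a, τ ^ #(insert a s) ≤ τ ^ #s * (#s + τ * Fintype.card α) := by
  have hterm : ∀ a, τ ^ #(insert a s) ≤ τ ^ #s * ((if a ∈ s then 1 else 0) + τ) := by
    intro a
    by_cases ha : a ∈ s
    · simp only [ha, insert_eq_of_mem, if_true]
      nlinarith [pow_nonneg hτ #s]
    · simp [ha, card_insert_of_notMem, pow_succ]
  calc ∑ a, τ ^ #(insert a s) ≤ ∑ a, τ ^ #s * ((if a ∈ s then 1 else 0) + τ) :=
        sum_le_sum fun a _ ↦ hterm a
    _ = τ ^ #s * (#s + τ * Fintype.card α) := by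
        rw [← mul_sum, sum_add_distrib, sum_boole, sum_const, card_univ, nsmul_eq_mul, mul_comm τ]
        simp

theorem sum_pow_card_image_le (hτ : 0 ≤ τ) (q : ℕ) :
    ∑ f : Fin q → α, τ ^ #(univ.image f) ≤ (q + τ * Fintype.card α) ^ q := by
  induction q with
  | zero => simp
  | succ q ih =>
    set c := τ * Fintype.card α
    calc ∑ f : Fin (q + 1) → α, τ ^ #(univ.image f)
        = ∑ g : Fin q → α, ∑ a, τ ^ #(insert a (univ.image g)) := by
          rw [← (Fin.consEquiv fun _ ↦ α).sum_comp, Fintype.sum_prod_type_right]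
          simp [Fin.consEquiv, Fin.image_univ_cons]
      _ ≤ ∑ g : Fin q → α, τ ^ #(univ.image g) * (q + c) := by
          gcongr with g
          refine (sum_pow_card_insert_le hτ _).trans ?_
          gcongr
          simpa using card_image_le (s := univ) (f := g)
      _ ≤ (q + c) ^ q * (q + c) := by
          rw [← sum_mul]; gcongr
      _ ≤ ((q + 1 : ℕ) + c) ^ (q + 1) := by
          rw [← pow_succ]; gcongr; linarith

end Combinatorics

section Probability

variable {Ω : Type*} [MeasurableSpace Ω] {μ : Measure Ω}

theorem ae_eq_zero_or_eq_one_of_measure_eq [IsProbabilityMeasure μ] {X : Ω → ℝ}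
    (hX : Measurable X) {τ : ℝ} (h1 : μ {ω | X ω = 1} = ENNReal.ofReal τ)
    (h0 : μ {ω | X ω = 0} = ENNReal.ofReal (1 - τ)) :
    ∀ᵐ ω ∂μ, X ω = 0 ∨ X ω = 1 := by
  have hmeas : MeasurableSet ({ω | X ω = 0} ∪ {ω | X ω = 1}) :=
    (hX (measurableSet_singleton 0)).union (hX (measurableSet_singleton 1))
  have hdisj : Disjoint {ω | X ω = 0} {ω | X ω = 1} :=
    Set.disjoint_left.2 fun ω h0 h1 ↦ zero_ne_one ((Eq.symm h0).trans h1)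
  have hfull : μ ({ω | X ω = 0} ∪ {ω | X ω = 1}) = 1 := by
    refine le_antisymm prob_le_one ?_
    calc (1 : ENNReal) = ENNReal.ofReal ((1 - τ) + τ) := by simp
      _ ≤ ENNReal.ofReal (1 - τ) + ENNReal.ofReal τ := ENNReal.ofReal_add_le
      _ = μ ({ω | X ω = 0} ∪ {ω | X ω = 1}) := by
          rw [measure_union hdisj (hX (measurableSet_singleton 1)), h0, h1]
  exact (prob_compl_eq_zero_iff hmeas).2 hfull

theorem integral_eq_measureReal_of_ae_eq_zero_or_eq_one {X : Ω → ℝ} (hX : Measurable X)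
    (h01 : ∀ᵐ ω ∂μ, X ω = 0 ∨ X ω = 1) :
    ∫ ω, X ω ∂μ = μ.real {ω | X ω = 1} := by
  have hind : X =ᵐ[μ] {ω | X ω = 1}.indicator 1 := by
    filter_upwards [h01] with ω hω
    rcases hω with h | h <;> simp [h]
  rw [integral_congr_ae hind]
  exact integral_indicator_one (hX (measurableSet_singleton 1))

theorem integrable_prod_of_ae_abs_le_one [IsFiniteMeasure μ] {ι : Type*} (s : Finset ι)
    {X : ι → Ω → ℝ} (hX : ∀ i ∈ s, AEStronglyMeasurable (X i) μ)
    (hle : ∀ i ∈ s, ∀ᵐ ω ∂μ, |X i ω| ≤ 1) :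
    Integrable (fun ω ↦ ∏ i ∈ s, X i ω) μ := by
  refine .of_bound (Finset.aestronglyMeasurable_fun_prod s hX) 1 ?_
  filter_upwards [(Filter.eventually_all_finset s).2 hle] with ω hω
  rw [Real.norm_eq_abs, abs_prod]
  exact prod_le_one (fun i _ ↦ abs_nonneg _) hω

theorem ProbabilityTheory.iIndepFun.integral_finset_prod {ι : Type*} {X : ι → Ω → ℝ}
    (hX : iIndepFun X μ) (hmeas : ∀ i, AEStronglyMeasurable (X i) μ) (s : Finset ι) :
    ∫ ω, ∏ i ∈ s, X i ω ∂μ = ∏ i ∈ s, ∫ ω, X i ω ∂μ := by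
  simp only [← prod_coe_sort s]
  exact (hX.precomp Subtype.val_injective).integral_fun_prod_eq_prod_integral fun i ↦ hmeas i

theorem ProbabilityTheory.iIndepFun.integral_sum_pow_eq_sum_pow_card_image {ι : Type*}
    [Fintype ι] [DecidableEq ι] {ξ : ι → Ω → ℝ} {τ : ℝ}
    (hindep : iIndepFun ξ μ) (hmeas : ∀ j, Measurable (ξ j))
    (h01 : ∀ j, ∀ᵐ ω ∂μ, ξ j ω = 0 ∨ ξ j ω = 1) (hmean : ∀ j, ∫ ω, ξ j ω ∂μ = τ) (q : ℕ) :
    ∫ ω, (∑ j, ξ j ω) ^ q ∂μ = ∑ f : Fin q → ι, τ ^ #(univ.image f) := by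
  have := hindep.isProbabilityMeasure
  have hint (f : Fin q → ι) : Integrable (fun ω ↦ ∏ i, ξ (f i) ω) μ := by
    refine integrable_prod_of_ae_abs_le_one _ (fun i _ ↦ (hmeas _).aestronglyMeasurable)
      fun i _ ↦ ?_
    filter_upwards [h01 (f i)] with ω h
    rcases h with h | h <;> simp [h]
  have hmoment (f : Fin q → ι) : ∫ ω, ∏ i, ξ (f i) ω ∂μ = τ ^ #(univ.image f) := by
    have hidem : (fun ω ↦ ∏ i, ξ (f i) ω) =ᵐ[μ] fun ω ↦ ∏ j ∈ univ.image f, ξ j ω := by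
      filter_upwards [ae_all_iff.2 h01] with ω hω
      refine prod_comp_eq_prod_image_of_isIdempotentElem univ f (ξ · ω) fun i _ ↦ ?_
      rcases hω (f i) with h | h <;> simp [h, IsIdempotentElem]
    rw [integral_congr_ae hidem,
      hindep.integral_finset_prod fun j ↦ (hmeas j).aestronglyMeasurable]
    simp [hmean]
  simp_rw [Fintype.sum_pow]
  rw [integral_finsetSum _ fun f _ ↦ hint f]
  exact sum_congr rfl fun f _ ↦ hmoment f

end Probability

theorem bernoulli_sum_moment_bound_general
    {Ω : Type*} [MeasureSpace Ω] [IsProbabilityMeasure (ℙ : Measure Ω)]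
    (n : ℕ) (τ : ℝ) (hτ0 : 0 < τ)
    (ξ : Fin n → Ω → ℝ) (hmeas : ∀ j, Measurable (ξ j))
    (hindep : iIndepFun ξ ℙ)
    (h1 : ∀ j, ℙ {ω | ξ j ω = 1} = ENNReal.ofReal τ)
    (h0 : ∀ j, ℙ {ω | ξ j ω = 0} = ENNReal.ofReal (1 - τ))
    (q : ℕ) :
    (∫ ω, (∑ j, ξ j ω) ^ q) ≤ ((q : ℝ) + Real.exp 1 * τ * n) ^ q := by
  have h01 j := ae_eq_zero_or_eq_one_of_measure_eq (hmeas j) (h1 j) (h0 j)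
  have hmean j : ∫ ω, ξ j ω = τ := by
    rw [integral_eq_measureReal_of_ae_eq_zero_or_eq_one (hmeas j) (h01 j), measureReal_def, h1,
      ENNReal.toReal_ofReal hτ0.le]
  calc (∫ ω, (∑ j, ξ j ω) ^ q) = ∑ f : Fin q → Fin n, τ ^ #(univ.image f) :=
        hindep.integral_sum_pow_eq_sum_pow_card_image hmeas h01 hmean q
    _ ≤ (q + τ * n) ^ q := by simpa using sum_pow_card_image_le (α := Fin n) hτ0.le q
    _ ≤ (q + Real.exp 1 * τ * n) ^ q := by
        gcongr
        exact le_mul_of_one_le_left hτ0.le (Real.one_le_exp zero_le_one)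

theorem bernoulli_sum_moment_bound
    {Ω : Type*} [MeasureSpace Ω] [IsProbabilityMeasure (ℙ : Measure Ω)]
    (n : ℕ) (τ : ℝ) (hτ0 : 0 < τ) (hτ1 : τ < 1)
    (ξ : Fin n → Ω → ℝ) (hmeas : ∀ j, Measurable (ξ j))
    (hindep : iIndepFun ξ ℙ)
    (h1 : ∀ j, ℙ {ω | ξ j ω = 1} = ENNReal.ofReal τ)
    (h0 : ∀ j, ℙ {ω | ξ j ω = 0} = ENNReal.ofReal (1 - τ))
    (q : ℕ) (hq : 0 < q) :
    (∫ ω, (∑ j, ξ j ω) ^ q) ≤ ((q : ℝ) + Real.exp 1 * τ * n) ^ q :=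
  bernoulli_sum_moment_bound_general n τ hτ0 ξ hmeas hindep h1 h0 q
end

section
/- Let s, L be positive integers and let T_L(θ) = ∑_{j=-L}^{L} a_j(θ) e(jθ), where each a_j(θ) is a random trigonometric polynomial of degree at most s, sup_θ |a_j(θ)| ≤ 1 almost surely, for each fixed θ the a_j(θ) are independent with E a_j(θ) = 0. Then for every A > 1 there is C = C(A) such that P[ ‖T_L‖_∞ > C·√(log(s+L))·√L ] ≤ (s+L)^{-A}. -/
/-!
Fix a sample `ω`. Each coefficient `a j ω` is a trigonometric polynomial of degree `s` bounded
by `1`, so its Fourier coefficients are bounded by `1` and it is `O(s²)`-Lipschitz. Hence `T_L`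
is `1`-periodic and `O((s + L)³)`-Lipschitz, and its supremum is attained up to an error `1` on
the grid of `N = 128 (s + L)³` points `i / N`. At a fixed `θ` the real and imaginary parts of
`T_L(θ)` are sums of `2L + 1` independent centred `[-1, 1]`-valued variables, so by Hoeffding
`P(|T_L(θ)| ≥ u / 2) ≤ 4 exp(-u² / (32 (2L + 1)))`. For `u = C √(log (s + L)) √L` with
`C² = 96 (A + 12)` this is at most `4 (s + L)^(-(A + 12))`, and the union bound over the grid
costs a factor `128 (s + L)³ ≤ (s + L)^12 / 4`.
-/

open MeasureTheory ProbabilityTheory Real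

noncomputable def expMode (k : ℤ) (θ : ℝ) : ℂ := Complex.exp (2 * π * Complex.I * k * θ)

lemma norm_expMode (k : ℤ) (θ : ℝ) : ‖expMode k θ‖ = 1 := by
  rw [expMode, show 2 * π * Complex.I * k * θ = ((2 * π * k * θ : ℝ) : ℂ) * Complex.I by
    push_cast; ring]
  exact Complex.norm_exp_ofReal_mul_I _

lemma expMode_mul_expMode (j k : ℤ) (θ : ℝ) : expMode j θ * expMode k θ = expMode (j + k) θ := by
  simp only [expMode, ← Complex.exp_add]
  push_cast
  ring_nf

lemma continuous_expMode (k : ℤ) : Continuous (expMode k) := by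
  unfold expMode
  fun_prop

lemma expMode_periodic (k : ℤ) : Function.Periodic (expMode k) 1 := by
  intro θ
  rw [expMode, show 2 * π * Complex.I * k * ((θ + 1 : ℝ) : ℂ)
      = 2 * π * Complex.I * k * θ + k * (2 * π * Complex.I) by push_cast; ring,
    Complex.exp_add, Complex.exp_int_mul_two_pi_mul_I, mul_one, expMode]

lemma norm_expMode_sub_le (k : ℤ) (x y : ℝ) :
    ‖expMode k x - expMode k y‖ ≤ 2 * π * |(k : ℝ)| * |x - y| := by
  have h : expMode k x - expMode k y
      = expMode k y * (Complex.exp (Complex.I * (2 * π * k * (x - y) : ℝ)) - 1) := by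
    simp only [expMode, mul_sub, mul_one, ← Complex.exp_add]
    push_cast
    ring_nf
  rw [h, norm_mul, norm_expMode, one_mul]
  refine norm_exp_I_mul_ofReal_sub_one_le.trans_eq ?_
  rw [norm_eq_abs, abs_mul, abs_mul, abs_of_pos two_pi_pos]

lemma integral_expMode (n : ℤ) :
    ∫ θ in (0 : ℝ)..1, expMode n θ = if n = 0 then 1 else 0 := by
  split_ifs with hn
  · simp [expMode, hn]
  · have hc : 2 * π * Complex.I * n ≠ 0 := by simp [hn, pi_ne_zero]
    have hper : expMode n 1 = expMode n 0 := by simpa using expMode_periodic n 0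
    simp only [expMode] at hper ⊢
    rw [integral_exp_mul_complex hc, hper, sub_self, zero_div]

lemma card_Icc_neg_self (n : ℕ) : ((Finset.Icc (-(n : ℤ)) n).card : ℝ) = 2 * n + 1 := by
  rw [Int.card_Icc, show (n + 1 - -n : ℤ).toNat = 2 * n + 1 by omega]
  push_cast
  ring

lemma abs_intCast_le_of_mem_Icc {n : ℕ} {k : ℤ} (hk : k ∈ Finset.Icc (-(n : ℤ)) n) :
    |(k : ℝ)| ≤ n := by
  rw [abs_le]
  exact_mod_cast Finset.mem_Icc.1 hk

section TrigPoly

variable {F : Finset ℤ} {c : ℤ → ℂ} {g : ℝ → ℂ}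

lemma coeff_eq_integral (hg : ∀ θ, g θ = ∑ k ∈ F, c k * expMode k θ) {k : ℤ} (hk : k ∈ F) :
    c k = ∫ θ in (0 : ℝ)..1, g θ * expMode (-k) θ := by
  simp_rw [hg, Finset.sum_mul, mul_assoc, expMode_mul_expMode]
  have hint (m : ℤ) : IntervalIntegrable (fun θ => c m * expMode (m + -k) θ) volume 0 1 :=
    (continuous_const.mul (continuous_expMode _)).intervalIntegrable _ _
  rw [intervalIntegral.integral_finsetSum fun m _ => hint m]
  simp_rw [intervalIntegral.integral_const_mul, integral_expMode, add_neg_eq_zero, mul_ite,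
    mul_one, mul_zero, Finset.sum_ite_eq', if_pos hk]

lemma norm_coeff_le (hg : ∀ θ, g θ = ∑ k ∈ F, c k * expMode k θ) {M : ℝ}
    (hM : ∀ θ, ‖g θ‖ ≤ M) {k : ℤ} (hk : k ∈ F) : ‖c k‖ ≤ M := by
  rw [coeff_eq_integral hg hk]
  simpa using intervalIntegral.norm_integral_le_of_norm_le_const (a := 0) (b := 1) fun θ _ => by
    rw [norm_mul, norm_expMode, mul_one]
    exact hM θ

lemma norm_sub_le_of_coeff_le {s : ℕ} (hF : F ⊆ Finset.Icc (-(s : ℤ)) s)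
    (hg : ∀ θ, g θ = ∑ k ∈ F, c k * expMode k θ) {M : ℝ} (hc : ∀ k ∈ F, ‖c k‖ ≤ M) (x y : ℝ) :
    ‖g x - g y‖ ≤ F.card * M * (2 * π * s) * |x - y| := by
  rw [hg, hg, ← Finset.sum_sub_distrib]
  calc _ ≤ ∑ k ∈ F, M * (2 * π * s * |x - y|) := norm_sum_le_of_le _ fun k hk => ?_
    _ = _ := by rw [Finset.sum_const, nsmul_eq_mul]; ring
  rw [← mul_sub, norm_mul]
  have hM : 0 ≤ M := (norm_nonneg _).trans (hc k hk)
  calc ‖c k‖ * ‖expMode k x - expMode k y‖ ≤ M * (2 * π * |(k : ℝ)| * |x - y|) :=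
        mul_le_mul (hc k hk) (norm_expMode_sub_le k x y) (norm_nonneg _) hM
    _ ≤ M * (2 * π * s * |x - y|) := by gcongr; exact abs_intCast_le_of_mem_Icc (hF hk)

end TrigPoly

def IsTrigPoly (s : ℕ) (g : ℝ → ℂ) : Prop :=
  ∃ c : ℤ → ℂ, ∀ θ, g θ = ∑ k ∈ Finset.Icc (-(s : ℤ)) s, c k * expMode k θ

namespace IsTrigPoly

variable {s : ℕ} {g : ℝ → ℂ}

lemma periodic (hg : IsTrigPoly s g) : Function.Periodic g 1 := by
  obtain ⟨c, hc⟩ := hg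
  intro θ
  simp only [hc, expMode_periodic _ θ]

lemma norm_sub_le (hg : IsTrigPoly s g) {M : ℝ} (hM : ∀ θ, ‖g θ‖ ≤ M) (x y : ℝ) :
    ‖g x - g y‖ ≤ (2 * s + 1) * M * (2 * π * s) * |x - y| := by
  obtain ⟨c, hc⟩ := hg
  rw [← card_Icc_neg_self]
  exact norm_sub_le_of_coeff_le subset_rfl hc (fun k hk => norm_coeff_le hc hM hk) x y

end IsTrigPoly

-- The paper's `T_L` for one sample `b j = a j ω` of the coefficients.
noncomputable def trigSumVarCoeff (L : ℕ) (b : ℤ → ℝ → ℂ) (θ : ℝ) : ℂ :=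
  ∑ j ∈ Finset.Icc (-(L : ℤ)) L, b j θ * expMode j θ

section TrigSumVarCoeff

variable {L : ℕ} {b : ℤ → ℝ → ℂ}

lemma trigSumVarCoeff_periodic (hb : ∀ j, Function.Periodic (b j) 1) :
    Function.Periodic (trigSumVarCoeff L b) 1 := by
  intro θ
  simp only [trigSumVarCoeff, hb _ θ, expMode_periodic _ θ]

lemma norm_trigSumVarCoeff_sub_le (hb : ∀ j θ, ‖b j θ‖ ≤ 1) {K : ℝ}
    (hK : ∀ j x y, ‖b j x - b j y‖ ≤ K * |x - y|) (x y : ℝ) :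
    ‖trigSumVarCoeff L b x - trigSumVarCoeff L b y‖ ≤ (2 * L + 1) * (K + 2 * π * L) * |x - y| := by
  rw [trigSumVarCoeff, trigSumVarCoeff, ← Finset.sum_sub_distrib]
  calc _ ≤ ∑ j ∈ Finset.Icc (-(L : ℤ)) L, (K + 2 * π * L) * |x - y| :=
        norm_sum_le_of_le _ fun j hj => ?_
    _ = _ := by rw [Finset.sum_const, nsmul_eq_mul, card_Icc_neg_self]; ring
  calc ‖b j x * expMode j x - b j y * expMode j y‖
      = ‖(b j x - b j y) * expMode j x + b j y * (expMode j x - expMode j y)‖ := by ring_nf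
    _ ≤ ‖b j x - b j y‖ + ‖expMode j x - expMode j y‖ := by
        refine (norm_add_le _ _).trans ?_
        rw [norm_mul, norm_mul, norm_expMode, mul_one]
        gcongr
        exact mul_le_of_le_one_left (norm_nonneg _) (hb j y)
    _ ≤ K * |x - y| + 2 * π * L * |x - y| := by
        gcongr
        · exact hK j x y
        · exact (norm_expMode_sub_le j x y).trans (by gcongr; exact abs_intCast_le_of_mem_Icc hj)
    _ = (K + 2 * π * L) * |x - y| := by ring

end TrigSumVarCoeff

lemma exists_lt_norm_sub_grid_le {E : Type*} [SeminormedAddCommGroup E] {f : ℝ → E}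
    (hf : Function.Periodic f 1) {N : ℕ} (hN : 0 < N) {ε : ℝ}
    (hε : ∀ x y, |x - y| ≤ 1 / (N : ℝ) → ‖f x - f y‖ ≤ ε) (θ : ℝ) :
    ∃ i < N, ‖f θ - f (i / N)‖ ≤ ε := by
  have hN' : (0 : ℝ) < N := by exact_mod_cast hN
  set x := N * Int.fract θ
  have hx : 0 ≤ x := by positivity
  refine ⟨⌊x⌋₊, (Nat.floor_lt hx).2 ?_, ?_⟩
  · simpa [x] using mul_lt_mul_of_pos_left (Int.fract_lt_one θ) hN'
  · rw [← hf.sub_int_mul_eq ⌊θ⌋, mul_one, ← Int.fract]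
    refine hε _ _ ?_
    have h₁ := Nat.floor_le hx
    have h₂ := Nat.lt_floor_add_one x
    rw [show Int.fract θ - ⌊x⌋₊ / N = (x - ⌊x⌋₊) / N by field_simp; ring, abs_div,
      abs_of_nonneg (sub_nonneg.2 h₁), Nat.abs_cast]
    exact div_le_div_of_nonneg_right (by linarith) hN'.le

lemma exists_lt_norm_trigSumVarCoeff_le {s L : ℕ} (hL : 0 < L) {b : ℤ → ℝ → ℂ}
    (hpoly : ∀ j, IsTrigPoly s (b j)) (hb : ∀ j θ, ‖b j θ‖ ≤ 1) (θ : ℝ) :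
    ∃ i < 128 * (s + L) ^ 3, ‖trigSumVarCoeff L b θ‖ ≤
      ‖trigSumVarCoeff L b (i / (128 * (s + L) ^ 3 : ℕ))‖ + 1 := by
  set N := 128 * (s + L) ^ 3
  have hN : (0 : ℝ) < N := by positivity
  have hKN : (2 * L + 1) * ((2 * s + 1) * 1 * (2 * π * s) + 2 * π * L) ≤ (N : ℝ) := by
    have hs : (s : ℝ) ≤ s + L := by linarith [(Nat.cast_nonneg L : (0 : ℝ) ≤ L)]
    have hLn : (L : ℝ) ≤ s + L := by linarith [(Nat.cast_nonneg s : (0 : ℝ) ≤ s)]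
    have hn : (1 : ℝ) ≤ s + L := by linarith [(Nat.one_le_cast.2 hL : (1 : ℝ) ≤ L)]
    push_cast [N]
    calc (2 * L + 1) * ((2 * s + 1) * 1 * (2 * π * s) + 2 * π * L)
        ≤ 3 * (s + L) * (3 * (s + L) * 1 * (2 * 4 * (s + L)) + 2 * 4 * ((s + L) * (s + L))) := by
          gcongr <;> nlinarith [pi_le_four]
      _ ≤ 128 * ((s : ℝ) + L) ^ 3 := by nlinarith [pow_pos (by linarith : (0 : ℝ) < s + L) 3]
  obtain ⟨i, hi, h⟩ := exists_lt_norm_sub_grid_le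
    (trigSumVarCoeff_periodic fun j => (hpoly j).periodic) (N := N) (by positivity) (ε := 1)
    (fun x y hxy => calc
      _ ≤ _ := norm_trigSumVarCoeff_sub_le hb (fun j => (hpoly j).norm_sub_le (hb j)) x y
      _ ≤ N * (1 / N) := by gcongr
      _ = 1 := by field_simp) θ
  exact ⟨i, hi, (norm_le_norm_add_norm_sub' _ _).trans (by gcongr)⟩

section Subgaussian

variable {Ω : Type*} [MeasurableSpace Ω] {μ : Measure Ω}

lemma ProbabilityTheory.HasSubgaussianMGF.measureReal_le_abs_le [IsFiniteMeasure μ]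
    {X : Ω → ℝ} {c : NNReal} (h : HasSubgaussianMGF X c μ) {ε : ℝ} (hε : 0 ≤ ε) :
    μ.real {ω | ε ≤ |X ω|} ≤ 2 * exp (-ε ^ 2 / (2 * c)) := by
  simp only [le_abs, Set.ofPred_or]
  calc _ ≤ μ.real {ω | ε ≤ X ω} + μ.real {ω | ε ≤ (-X) ω} := measureReal_union_le _ _
    _ ≤ _ := by linarith [h.measure_ge_le hε, h.neg.measure_ge_le hε]

variable [IsProbabilityMeasure μ]

lemma hasSubgaussianMGF_sum_of_abs_le_one {ι : Type*} {X : ι → Ω → ℝ} (hindep : iIndepFun X μ)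
    (hmeas : ∀ i, Measurable (X i)) (hbdd : ∀ i ω, |X i ω| ≤ 1) (hmean : ∀ i, ∫ ω, X i ω ∂μ = 0)
    (s : Finset ι) : HasSubgaussianMGF (fun ω => ∑ i ∈ s, X i ω) s.card μ := by
  have hX (i : ι) : HasSubgaussianMGF (X i) 1 μ := by
    convert hasSubgaussianMGF_of_mem_Icc_of_integral_eq_zero (hmeas i).aemeasurable
      (ae_of_all _ fun ω => abs_le.1 (hbdd i ω)) (hmean i)
    norm_num
  simpa using HasSubgaussianMGF.sum_of_iIndepFun hindep (c := fun _ => 1) (s := s) fun i _ => hX i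

lemma measureReal_le_norm_sum_le {ι : Type*} {Z : ι → Ω → ℂ} (hindep : iIndepFun Z μ)
    (hmeas : ∀ i, Measurable (Z i)) (hbdd : ∀ i ω, ‖Z i ω‖ ≤ 1) (hmean : ∀ i, ∫ ω, Z i ω ∂μ = 0)
    (s : Finset ι) {u : ℝ} (hu : 0 ≤ u) :
    μ.real {ω | u ≤ ‖∑ i ∈ s, Z i ω‖} ≤ 4 * exp (-u ^ 2 / (8 * s.card)) := by
  have hpart (φ : ℂ →L[ℝ] ℝ) (hφ : ‖φ‖ ≤ 1) :
      μ.real {ω | u / 2 ≤ |φ (∑ i ∈ s, Z i ω)|} ≤ 2 * exp (-u ^ 2 / (8 * s.card)) := by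
    have hφZ (z : ℂ) : |φ z| ≤ ‖z‖ :=
      (φ.le_opNorm z).trans (mul_le_of_le_one_left (norm_nonneg _) hφ)
    have hsub := hasSubgaussianMGF_sum_of_abs_le_one
      (hindep.comp (fun _ => φ) fun _ => φ.measurable)
      (fun i => φ.measurable.comp (hmeas i)) (fun i ω => (hφZ _).trans (hbdd i ω))
      (fun i => by
        simp only [Function.comp_apply]
        rw [φ.integral_comp_comm (Integrable.of_bound (hmeas i).aestronglyMeasurable 1
          (ae_of_all _ (hbdd i))), hmean i, map_zero]) s
    simp only [Function.comp_apply, ← map_sum] at hsub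
    convert hsub.measureReal_le_abs_le (by positivity : 0 ≤ u / 2) using 3
    push_cast
    ring
  have hcover : {ω | u ≤ ‖∑ i ∈ s, Z i ω‖} ⊆ {ω | u / 2 ≤ |Complex.reCLM (∑ i ∈ s, Z i ω)|} ∪
      {ω | u / 2 ≤ |Complex.imCLM (∑ i ∈ s, Z i ω)|} := by
    intro ω hω
    have := hω.trans (Complex.norm_le_abs_re_add_abs_im _)
    by_contra h
    simp only [Set.mem_union, Set.mem_ofPred_eq, not_or, not_le, Complex.reCLM_apply,
      Complex.imCLM_apply] at h
    linarith
  calc _ ≤ _ := measureReal_mono hcover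
    _ ≤ _ := measureReal_union_le _ _
    _ ≤ _ := add_le_add (hpart _ Complex.reCLM_norm.le) (hpart _ Complex.imCLM_norm.le)
    _ = _ := by ring

end Subgaussian

lemma measureReal_le_norm_trigSumVarCoeff_le {Ω : Type*} [MeasurableSpace Ω] {μ : Measure Ω}
    [IsProbabilityMeasure μ] (L : ℕ) {a : ℤ → Ω → ℝ → ℂ} {θ : ℝ}
    (hmeas : ∀ j, Measurable (fun ω => a j ω θ)) (hbdd : ∀ j ω, ‖a j ω θ‖ ≤ 1)
    (hindep : iIndepFun (fun j ω => a j ω θ) μ) (hmean : ∀ j, ∫ ω, a j ω θ ∂μ = 0)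
    {u : ℝ} (hu : 0 ≤ u) :
    μ.real {ω | u ≤ ‖trigSumVarCoeff L (a · ω) θ‖} ≤ 4 * exp (-u ^ 2 / (8 * (2 * L + 1))) := by
  rw [← card_Icc_neg_self]
  exact measureReal_le_norm_sum_le (Z := fun j ω => a j ω θ * expMode j θ)
    (hindep.comp (fun j z => z * expMode j θ) fun j => measurable_mul_const _)
    (fun j => (hmeas j).mul_const _)
    (fun j ω => by rw [norm_mul, norm_expMode, mul_one]; exact hbdd j ω)
    (fun j => by rw [integral_mul_const, hmean j, zero_mul]) _ hu

lemma two_le_sqrt_mul_sqrt_log_mul_sqrt {B n L : ℝ} (hB : 1 ≤ B) (hn : 2 ≤ n) (hL : 1 ≤ L) :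
    2 ≤ √(96 * B) * √(log n) * √L := by
  have hlog : log 2 ≤ log n := log_le_log (by norm_num) hn
  have := log_two_gt_d9
  have hB0 : 0 ≤ 96 * B := by linarith
  have hBlog : 0 ≤ 96 * B * log n := mul_nonneg hB0 (by linarith)
  rw [← sqrt_mul hB0, ← sqrt_mul hBlog, le_sqrt zero_le_two (mul_nonneg hBlog (by linarith))]
  nlinarith [mul_le_mul hB hL zero_le_one (by linarith : (0 : ℝ) ≤ B)]

lemma exp_neg_sq_div_le_rpow_neg {B n L : ℝ} (hB : 0 ≤ B) (hn : 1 ≤ n) (hL : 1 ≤ L) :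
    exp (-(√(96 * B) * √(log n) * √L / 2) ^ 2 / (8 * (2 * L + 1))) ≤ n ^ (-B) := by
  have hlog := log_nonneg hn
  rw [rpow_def_of_pos (by linarith), exp_le_exp, div_pow, mul_pow, mul_pow,
    sq_sqrt (by positivity), sq_sqrt hlog, sq_sqrt (by linarith), neg_div,
    neg_le, le_div_iff₀ (by positivity)]
  nlinarith [mul_nonneg hB hlog]

lemma mul_rpow_neg_add_twelve_le {n : ℝ} (hn : 2 ≤ n) (A : ℝ) :
    128 * n ^ 3 * (4 * n ^ (-(A + 12))) ≤ n ^ (-A) := by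
  have h512 : (512 : ℝ) ≤ n ^ 9 := by
    calc (512 : ℝ) = 2 ^ 9 := by norm_num
      _ ≤ n ^ 9 := by gcongr
  calc 128 * n ^ 3 * (4 * n ^ (-(A + 12))) = 512 * n ^ 3 * n ^ (-(A + 12)) := by ring
    _ ≤ n ^ 9 * n ^ 3 * n ^ (-(A + 12)) := by gcongr
    _ = n ^ (-A) := by
        rw [← pow_add, ← rpow_natCast, ← rpow_add (by linarith)]
        norm_num

theorem salem_zygmund_random_coefficients (A : ℝ) (hA : 1 < A) :
    ∃ C : ℝ, 0 < C ∧
      ∀ (s L : ℕ), 0 < s → 0 < L →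
      ∀ (Ω : Type) [MeasureSpace Ω] [IsProbabilityMeasure (ℙ : Measure Ω)]
        (a : ℤ → Ω → ℝ → ℂ),
        (∀ j θ, Measurable (fun ω => a j ω θ)) →
        (∀ j ω, ∃ c : ℤ → ℂ, ∀ θ : ℝ,
          a j ω θ = ∑ k ∈ Finset.Icc (-(s:ℤ)) s, c k * Complex.exp (2 * π * Complex.I * k * θ)) →
        (∀ j ω θ, ‖a j ω θ‖ ≤ 1) →
        (∀ θ : ℝ, iIndepFun (fun j ω => a j ω θ) ℙ) →
        (∀ j θ, ∫ ω, a j ω θ = 0) →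
        ℙ {ω | ∃ θ : ℝ,
            C * Real.sqrt (Real.log (s + L)) * Real.sqrt L <
              ‖∑ j ∈ Finset.Icc (-(L:ℤ)) L,
                a j ω θ * Complex.exp (2 * π * Complex.I * j * θ)‖} ≤
          ENNReal.ofReal (((s : ℝ) + L) ^ (-A)) := by
  refine ⟨√(96 * (A + 12)), by positivity, ?_⟩
  intro s L hs hL Ω _ _ a hmeas hpoly hbdd hindep hmean
  have hn : (2 : ℝ) ≤ s + L := by
    have : (1 : ℝ) ≤ s := by exact_mod_cast hs
    have : (1 : ℝ) ≤ L := by exact_mod_cast hL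
    linarith
  set u := √(96 * (A + 12)) * √(log (s + L)) * √L
  set N := 128 * (s + L) ^ 3
  have hu : 2 ≤ u := two_le_sqrt_mul_sqrt_log_mul_sqrt (by linarith) hn (by exact_mod_cast hL)
  have hcover : {ω | ∃ θ : ℝ, u < ‖trigSumVarCoeff L (a · ω) θ‖} ⊆
      ⋃ i ∈ Finset.range N, {ω | u / 2 ≤ ‖trigSumVarCoeff L (a · ω) (i / N)‖} := by
    rintro ω ⟨θ, hθ⟩
    obtain ⟨i, hi, hle⟩ := exists_lt_norm_trigSumVarCoeff_le hL (hpoly · ω) (hbdd · ω) θ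
    exact Set.mem_biUnion (Finset.mem_range.2 hi) (show u / 2 ≤ _ by linarith)
  rw [ENNReal.le_ofReal_iff_toReal_le (measure_ne_top _ _) (by positivity)]
  calc (ℙ : Measure Ω).real _
      ≤ (ℙ : Measure Ω).real _ := measureReal_mono hcover (measure_ne_top _ _)
    _ ≤ _ := measureReal_biUnion_finset_le _ _
    _ ≤ ∑ i ∈ Finset.range N, 4 * exp (-(u / 2) ^ 2 / (8 * (2 * L + 1))) :=
        Finset.sum_le_sum fun i _ => measureReal_le_norm_trigSumVarCoeff_le L (hmeas · _)
          (hbdd · · _) (hindep _) (hmean · _) (by linarith)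
    _ ≤ N * (4 * ((s : ℝ) + L) ^ (-(A + 12))) := by
        rw [Finset.sum_const, Finset.card_range, nsmul_eq_mul]
        gcongr
        exact exp_neg_sq_div_le_rpow_neg (by linarith) (by linarith) (by exact_mod_cast hL)
    _ ≤ _ := by
        push_cast [N]
        exact mul_rpow_neg_add_twelve_le hn A
end
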